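/- Let n ≥ 1 and k ≥ 1 be integers and d ∈ ℝ with d ≠ 0. Set F_n := (y + d x^{n+1}, (n+1)x^{2n+1} + (n+1)d x^n y), D₀ := (x, (n+1)y), and G := F_n − (2(n+1)d/(k+2(n+1)))·x^n·D₀. Then the following are equivalent: (i) for all α₀, α₁ ∈ ℝ, if the polynomial y² − x^{2n+2} divides ∇(α₀ x^{k+n+2} + α₁ x^{k+1}(y − x^{n+1}))·G in ℝ[x,y], then α₀ = α₁ = 0; (ii) |d| ≠ 1 + 2(n+1)/k. -/
import Mathlib


open MvPolynomial

/-- `∇p · (P,Q)` for a planar polynomial vector field `(P,Q)`. -/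
noncomputable def gradDot (p P Q : MvPolynomial (Fin 2) ℝ) : MvPolynomial (Fin 2) ℝ :=
  pderiv 0 p * P + pderiv 1 p * Q

lemma pd0_pow (m : ℕ) :
    pderiv (0 : Fin 2) ((X 0 : MvPolynomial (Fin 2) ℝ) ^ (m+1)) = C ((m:ℝ)+1) * X 0 ^ m := by
  rw [Derivation.leibniz_pow]; simp

lemma pd1_pow0 (m : ℕ) :
    pderiv (1 : Fin 2) ((X 0 : MvPolynomial (Fin 2) ℝ) ^ m) = 0 := by
  rw [Derivation.leibniz_pow]; simp

lemma key_identity (n k : ℕ) (α₀ α₁ e : ℝ) :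
    gradDot (C α₀ * X 0 ^ (k+n+2) + C α₁ * X 0 ^ (k+1) * (X 1 - X 0^(n+1)))
      (X 1 + C e * X 0^(n+1))
      (C ((n:ℝ)+1) * X 0^(2*n+1) + C (((n:ℝ)+1)*e) * X 0^n * X 1)
  = C (((k:ℝ)+(n:ℝ)+2)*(α₀ - α₁ + α₁*e)) * X 0^(k+n+1) * X 1
    + C (((k:ℝ)+(n:ℝ)+2)*((α₀-α₁)*e + α₁)) * X 0^(k+2*n+2)
    + C (α₁*((k:ℝ)+1)) * X 0^k * (X 1^2 - X 0^(2*n+2)) := by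
  have h1 : k+n+2 = (k+n+1)+1 := by ring
  simp only [gradDot, map_add, Derivation.leibniz, map_sub, h1, pd0_pow, pd1_pow0,
    pderiv_X_self, pderiv_C, pderiv_X_of_ne (show (1:Fin 2) ≠ 0 by decide),
    pderiv_X_of_ne (show (0:Fin 2) ≠ 1 by decide)]
  simp only [smul_eq_mul, mul_zero, zero_mul, mul_one, add_zero, zero_add, sub_zero, zero_sub]
  push_cast
  simp only [map_add, map_mul, map_sub, map_one, C_1, map_ofNat]
  ring

set_option maxHeartbeats 1600000 in
/-- The kernel of the conservative homological operator
`ℓᶜ_{k+2(n+1)}` is trivial if and only if `|d| ≠ 1 + 2(n+1)/k`: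
for `G = F_n − (2(n+1)d/(k+2(n+1)))·x^n·D₀` and
`p = α₀ x^{k+n+2} + α₁ x^{k+1}(y − x^{n+1})`, divisibility of `∇p·G` by
`y² − x^{2n+2}` forces `α₀ = α₁ = 0` exactly when `|d| ≠ 1 + 2(n+1)/k`. -/
theorem kernel_conservative_operator_trivial_iff
    (n k : ℕ) (hn : 1 ≤ n) (hk : 1 ≤ k) (d : ℝ) (hd : d ≠ 0) :
    (∀ α₀ α₁ : ℝ,
      (X 1 ^ 2 - X 0 ^ (2 * n + 2) : MvPolynomial (Fin 2) ℝ) ∣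
        gradDot (C α₀ * X 0 ^ (k + n + 2) + C α₁ * X 0 ^ (k + 1) * (X 1 - X 0 ^ (n + 1)))
          ((X 1 + C d * X 0 ^ (n + 1))
            - C (2 * ((n : ℝ) + 1) * d / ((k : ℝ) + 2 * ((n : ℝ) + 1))) * X 0 ^ n * X 0)
          ((C ((n : ℝ) + 1) * X 0 ^ (2 * n + 1) + C (((n : ℝ) + 1) * d) * X 0 ^ n * X 1)
            - C (2 * ((n : ℝ) + 1) * d / ((k : ℝ) + 2 * ((n : ℝ) + 1))) * X 0 ^ n
              * (C ((n : ℝ) + 1) * X 1)) →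
      α₀ = 0 ∧ α₁ = 0) ↔
    |d| ≠ 1 + 2 * ((n : ℝ) + 1) / (k : ℝ) := by
  have hK : (0:ℝ) < (k:ℝ) := by exact_mod_cast hk
  have hs : (0:ℝ) < (k:ℝ) + 2*((n:ℝ)+1) := by positivity
  obtain ⟨c, hc⟩ : ∃ c : ℝ, c = 2 * ((n : ℝ) + 1) * d / ((k : ℝ) + 2 * ((n : ℝ) + 1)) :=
    ⟨_, rfl⟩
  rw [← hc]
  obtain ⟨e, he⟩ : ∃ e : ℝ, e = d - c := ⟨_, rfl⟩
  -- rewrite the vector field in the simplified form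
  have hPe : ((X 1 + C d * X 0 ^ (n + 1))
      - C c * X 0 ^ n * X 0 : MvPolynomial (Fin 2) ℝ)
      = X 1 + C e * X 0 ^ (n+1) := by
    simp only [he, map_sub]; ring
  have hQe : ((C ((n : ℝ) + 1) * X 0 ^ (2 * n + 1) + C (((n : ℝ) + 1) * d) * X 0 ^ n * X 1)
      - C c * X 0 ^ n * (C ((n : ℝ) + 1) * X 1) : MvPolynomial (Fin 2) ℝ)
      = C ((n:ℝ)+1) * X 0^(2*n+1) + C (((n:ℝ)+1)*e) * X 0^n * X 1 := by
    simp only [he, map_sub, map_mul, map_add, map_one, C_1]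
    ring
  have hgrad : ∀ α₀ α₁ : ℝ,
      gradDot (C α₀ * X 0 ^ (k + n + 2) + C α₁ * X 0 ^ (k + 1) * (X 1 - X 0 ^ (n + 1)))
        ((X 1 + C d * X 0 ^ (n + 1)) - C c * X 0 ^ n * X 0)
        ((C ((n : ℝ) + 1) * X 0 ^ (2 * n + 1) + C (((n : ℝ) + 1) * d) * X 0 ^ n * X 1)
          - C c * X 0 ^ n * (C ((n : ℝ) + 1) * X 1))
      = C (((k:ℝ)+(n:ℝ)+2)*(α₀ - α₁ + α₁*e)) * X 0^(k+n+1) * X 1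
        + C (((k:ℝ)+(n:ℝ)+2)*((α₀-α₁)*e + α₁)) * X 0^(k+2*n+2)
        + C (α₁*((k:ℝ)+1)) * X 0^k * (X 1^2 - X 0^(2*n+2)) := by
    intro α₀ α₁
    rw [hPe, hQe]
    exact key_identity n k α₀ α₁ e
  have he_eq : e = d * (k:ℝ) / ((k:ℝ) + 2*((n:ℝ)+1)) := by
    rw [he, hc]; field_simp; ring
  have hm : ((k:ℝ)+(n:ℝ)+2) ≠ 0 := by positivity
  constructor
  · -- triviality → |d| ≠ 1 + 2(n+1)/k
    intro H habs
    have hd2 : d^2 = (1 + 2 * ((n : ℝ) + 1) / (k : ℝ))^2 := by rw [← sq_abs, habs]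
    have he2 : e^2 = 1 := by
      rw [he_eq]
      field_simp at hd2 ⊢
      nlinarith [hd2, hK, hs]
    have hdvd : (X 1 ^ 2 - X 0 ^ (2 * n + 2) : MvPolynomial (Fin 2) ℝ) ∣
        gradDot (C (1-e) * X 0 ^ (k + n + 2) + C (1:ℝ) * X 0 ^ (k + 1) * (X 1 - X 0 ^ (n + 1)))
          ((X 1 + C d * X 0 ^ (n + 1)) - C c * X 0 ^ n * X 0)
          ((C ((n : ℝ) + 1) * X 0 ^ (2 * n + 1) + C (((n : ℝ) + 1) * d) * X 0 ^ n * X 1)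
            - C c * X 0 ^ n * (C ((n : ℝ) + 1) * X 1)) := by
      refine ⟨C ((1:ℝ)*((k:ℝ)+1)) * X 0^k, ?_⟩
      rw [hgrad (1-e) 1]
      have h0 : ((k:ℝ)+(n:ℝ)+2)*((1-e) - 1 + 1*e) = 0 := by ring
      have h0' : ((k:ℝ)+(n:ℝ)+2)*(((1-e)-1)*e + 1) = 0 := by
        linear_combination (-((k:ℝ)+(n:ℝ)+2)) * he2
      rw [h0, h0', map_zero]
      ring
    exact one_ne_zero (H (1-e) 1 hdvd).2
  · -- |d| ≠ 1 + 2(n+1)/k → triviality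
    intro habs α₀ α₁ hdvd
    obtain ⟨q, hq⟩ := hdvd
    rw [hgrad α₀ α₁] at hq
    have E1 := congrArg (eval ![(1:ℝ),1]) hq
    have E2 := congrArg (eval ![(1:ℝ),-1]) hq
    simp only [eval_add, eval_mul, eval_sub, eval_pow, eval_C, eval_X, Matrix.cons_val_zero,
      Matrix.cons_val_one, Matrix.head_cons, one_pow] at E1 E2
    norm_num at E1 E2
    have hc1 : ((k:ℝ)+(n:ℝ)+2)*(α₀ - α₁ + α₁*e) = 0 := by linarith
    have hc2 : ((k:ℝ)+(n:ℝ)+2)*((α₀-α₁)*e + α₁) = 0 := by linarith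
    have h1 : α₀ - α₁ + α₁*e = 0 := by
      rcases mul_eq_zero.mp hc1 with h | h
      · exact absurd h hm
      · exact h
    have h2 : (α₀-α₁)*e + α₁ = 0 := by
      rcases mul_eq_zero.mp hc2 with h | h
      · exact absurd h hm
      · exact h
    have he2 : e^2 ≠ 1 := by
      intro he2
      rcases mul_eq_zero.mp (show (e-1)*(e+1) = 0 by linear_combination he2) with h | h
      · have he1 : e = 1 := by linarith
        rw [he1] at he_eq
        have hde : d = ((k:ℝ) + 2*((n:ℝ)+1)) / (k:ℝ) := by
          field_simp at he_eq ⊢; linarith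
        apply habs
        rw [hde, abs_of_pos (by positivity)]
        field_simp
      · have he1 : e = -1 := by linarith
        rw [he1] at he_eq
        have hde : d = -(((k:ℝ) + 2*((n:ℝ)+1)) / (k:ℝ)) := by
          field_simp at he_eq ⊢; linarith
        apply habs
        rw [hde, abs_neg, abs_of_pos (by positivity)]
        field_simp
    have ha1 : α₁ = 0 := by
      have h3 : α₁ * (1 - e^2) = 0 := by linear_combination h2 - e * h1
      rcases mul_eq_zero.mp h3 with h | h
      · exact h
      · exact absurd (by linarith : e^2 = 1) he2
    have ha0 : α₀ = 0 := by rw [ha1] at h1; linarith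
    exact ⟨ha0, ha1⟩
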